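/- arXiv:2512.03915 — 10 statements merged into one kernel-verified Lean document; each statement's English description precedes it below -/
import Mathlib

section
/- Using the primal-dual load-balancing scheme with K=1, the change in the Lagrangian over one iteration satisfies exactly: 𝓛(x^(n+1), p^(n+1)) − 𝓛(x^(n), p^(n)) = ∑_{i=1}^T b^(n+1)(i) − ∑_{k=1}^E ε_k^(n) (A_k^(n) − L)², i.e., the improvement equals the total switching benefit minus the step-size-weighted squared load imbalances. -/
open Finset

noncomputable section

/-- Load of expert `k` at iteration `n`: the number of tokens assigned to expert `k`. -/
def load {T E : ℕ} (α : ℕ → Fin T → Fin E) (n : ℕ) (k : Fin E) : ℕ :=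
  (Finset.univ.filter fun i => α n i = k).card

/-- The target (perfectly balanced) load `L = T / E` (sparsity `K = 1`). -/
def targetLoad (T E : ℕ) : ℝ := (T : ℝ) / (E : ℝ)

/-- The Lagrangian `𝓛(x⁽ⁿ⁾, p⁽ⁿ⁾) = ∑ᵢ (γ_{i α_n(i)} + p_{α_n(i)}⁽ⁿ⁾) - L ∑ₖ pₖ⁽ⁿ⁾`. -/
def lagrangian {T E : ℕ} (γ : Fin T → Fin E → ℝ) (p : ℕ → Fin E → ℝ)
    (α : ℕ → Fin T → Fin E) (n : ℕ) : ℝ :=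
  (∑ i, (γ i (α n i) + p n (α n i))) - targetLoad T E * ∑ k, p n k

/-- The switching benefit `b⁽ⁿ⁺¹⁾(i)`. -/
def benefit {T E : ℕ} (γ : Fin T → Fin E → ℝ) (p : ℕ → Fin E → ℝ)
    (α : ℕ → Fin T → Fin E) (n : ℕ) (i : Fin T) : ℝ :=
  (γ i (α (n+1) i) + p (n+1) (α (n+1) i)) - (γ i (α n i) + p (n+1) (α n i))


lemma sum_comp_load {T E : ℕ} (α : ℕ → Fin T → Fin E) (n : ℕ) (f : Fin E → ℝ) :
    ∑ i : Fin T, f (α n i) = ∑ k : Fin E, (load α n k : ℝ) * f k := by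
  rw [← Finset.sum_fiberwise Finset.univ (α n) (fun i => f (α n i))]
  refine Finset.sum_congr rfl fun k _ => ?_
  rw [Finset.sum_congr rfl (fun i hi => by
    rw [(Finset.mem_filter.mp hi).2]), Finset.sum_const, load, nsmul_eq_mul]

/-- **Theorem (Change in Lagrangian).**  Under the primal-dual scheme with `K = 1`,
`𝓛(x⁽ⁿ⁺¹⁾,p⁽ⁿ⁺¹⁾) - 𝓛(x⁽ⁿ⁾,p⁽ⁿ⁾) = ∑ᵢ b⁽ⁿ⁺¹⁾(i) - ∑ₖ εₖ⁽ⁿ⁾ (Aₖ⁽ⁿ⁾ - L)²`. -/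
theorem lagrangian_change (T E : ℕ) (hE : 0 < E) (hdvd : E ∣ T)
    (γ : Fin T → Fin E → ℝ) (p : ℕ → Fin E → ℝ) (α : ℕ → Fin T → Fin E)
    (ε : ℕ → Fin E → ℝ) (hε : ∀ n k, 0 < ε n k)
    (hargmax : ∀ n (i : Fin T) (k : Fin E), k ≠ α n i →
      γ i k + p n k < γ i (α n i) + p n (α n i))
    (hdual : ∀ n (k : Fin E),
      p (n+1) k = p n k + ε n k * (targetLoad T E - (load α n k : ℝ)))
    (n : ℕ) :
    lagrangian γ p α (n+1) - lagrangian γ p α n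
      = (∑ i, benefit γ p α n i)
        - ∑ k, ε n k * ((load α n k : ℝ) - targetLoad T E) ^ 2 := by
  have key : ∀ g : Fin E → ℝ, ∑ i, g (α n i) = ∑ k, (load α n k : ℝ) * g k :=
    sum_comp_load α n
  simp only [lagrangian, benefit]
  rw [show (∑ i, (γ i (α n i) + p n (α n i)))
      = (∑ i, (γ i (α n i) + p (n+1) (α n i)))
        - ∑ i, (p (n+1) (α n i) - p n (α n i)) by
    rw [← Finset.sum_sub_distrib]
    exact Finset.sum_congr rfl fun i _ => by ring]
  rw [Finset.sum_sub_distrib (f := fun i => γ i (α (n+1) i) + p (n+1) (α (n+1) i)),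
    key (fun k => p (n+1) k - p n k)]
  have h1 : ∀ k, p (n+1) k - p n k = ε n k * (targetLoad T E - (load α n k : ℝ)) :=
    fun k => by rw [hdual n k]; ring
  have h2 : ∑ k, (load α n k : ℝ) * (p (n+1) k - p n k)
      - targetLoad T E * ∑ k, (p (n+1) k - p n k)
      = - ∑ k, ε n k * ((load α n k : ℝ) - targetLoad T E) ^ 2 := by
    rw [Finset.mul_sum, ← Finset.sum_sub_distrib, ← Finset.sum_neg_distrib]
    exact Finset.sum_congr rfl fun k _ => by rw [h1 k]; ring
  have h3 : targetLoad T E * ∑ k, p (n+1) k - targetLoad T E * ∑ k, p n k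
      = targetLoad T E * ∑ k, (p (n+1) k - p n k) := by
    rw [Finset.sum_sub_distrib, mul_sub]
  linarith [h2, h3]
end
end

section
/- Assume the DeepSeek step-size ε_k^(n) = u/|L − A_k^(n)| (equivalently p_k^(n+1) = p_k^(n) + u·sign(L − A_k^(n))) for a constant u > 0, that token i switched experts between iterations n and n+1 (α_{n+1}(i) ≠ α_n(i)), and that there are no ties in bias-shifted scores. Then sign(L − A_{α_{n+1}(i)}^(n)) > sign(L − A_{α_n(i)}^(n)); that is, token i switched to an expert with a strictly lower designation in the ordering Overloaded (load > L) ≻ Balanced (load = L) ≻ Underloaded (load < L). -/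
open Finset

noncomputable section

/-- **Theorem (DeepSeek switching, part 1).** If token `i` switched experts between
iterations `n` and `n+1`, then `sign(L - A_{α_{n+1}(i)}⁽ⁿ⁾) > sign(L - A_{α_n(i)}⁽ⁿ⁾)`:
the token moved to a strictly lower designation in the ordering
Overloaded ≻ Balanced ≻ Underloaded. -/
theorem switch_to_less_loaded (T E : ℕ) (hE : 0 < E) (hdvd : E ∣ T)
    (γ : Fin T → Fin E → ℝ) (p : ℕ → Fin E → ℝ) (α : ℕ → Fin T → Fin E)
    (u : ℝ) (hu : 0 < u)
    -- no ties in bias-shifted scores: at every iteration each token has a unique argmax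
    (hargmax : ∀ n (i : Fin T) (k : Fin E), k ≠ α n i →
      γ i k + p n k < γ i (α n i) + p n (α n i))
    -- DeepSeek dual update: `pₖ⁽ⁿ⁺¹⁾ = pₖ⁽ⁿ⁾ + u · sign(L - Aₖ⁽ⁿ⁾)`
    (hdual : ∀ n (k : Fin E),
      p (n+1) k = p n k + u * Real.sign (targetLoad T E - (load α n k : ℝ)))
    (n : ℕ) (i : Fin T) (hswitch : α (n+1) i ≠ α n i) :
    Real.sign (targetLoad T E - (load α n (α n i) : ℝ))
      < Real.sign (targetLoad T E - (load α n (α (n+1) i) : ℝ)) := by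
  have h1 := hargmax (n+1) i (α n i) hswitch.symm
  have h2 := hargmax n i (α (n+1) i) hswitch
  rw [hdual n (α n i), hdual n (α (n+1) i)] at h1
  nlinarith [h1, h2, hu]
end
end

section
/- Assume the DeepSeek step-size ε_k^(n) = u/|L − A_k^(n)| (equivalently p_k^(n+1) = p_k^(n) + u·sign(L − A_k^(n))) for a constant u > 0, that token i switched experts between iterations n and n+1 (α_{n+1}(i) ≠ α_n(i)), and that there are no ties in bias-shifted scores. Then the switching benefit of token i is strictly bounded: 0 < b^(n+1)(i) < 2u. -/
open Finset

noncomputable section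

/-- **Theorem (DeepSeek switching, part 2).** If token `i` switched experts between
iterations `n` and `n+1`, then its switching benefit is strictly bounded:
`0 < b⁽ⁿ⁺¹⁾(i) < 2u`. -/
theorem switching_benefit_bound (T E : ℕ) (hE : 0 < E) (hdvd : E ∣ T)
    (γ : Fin T → Fin E → ℝ) (p : ℕ → Fin E → ℝ) (α : ℕ → Fin T → Fin E)
    (u : ℝ) (hu : 0 < u)
    -- no ties in bias-shifted scores: at every iteration each token has a unique argmax
    (hargmax : ∀ n (i : Fin T) (k : Fin E), k ≠ α n i →
      γ i k + p n k < γ i (α n i) + p n (α n i))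
    -- DeepSeek dual update: `pₖ⁽ⁿ⁺¹⁾ = pₖ⁽ⁿ⁾ + u · sign(L - Aₖ⁽ⁿ⁾)`
    (hdual : ∀ n (k : Fin E),
      p (n+1) k = p n k + u * Real.sign (targetLoad T E - (load α n k : ℝ)))
    (n : ℕ) (i : Fin T) (hswitch : α (n+1) i ≠ α n i) :
    0 < benefit γ p α n i ∧ benefit γ p α n i < 2 * u := by
  constructor
  · have h := hargmax (n+1) i (α n i) hswitch.symm
    simpa [benefit] using sub_pos.mpr h
  · have h := hargmax n i (α (n+1) i) hswitch
    have hb := hdual n (α (n+1) i)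
    have ha := hdual n (α n i)
    have s1 : Real.sign (targetLoad T E - (load α n (α (n+1) i) : ℝ)) ≤ 1 := by
      rcases Real.sign_apply_eq (targetLoad T E - (load α n (α (n+1) i) : ℝ)) with h|h|h <;>
        rw [h] <;> norm_num
    have s2 : -1 ≤ Real.sign (targetLoad T E - (load α n (α n i) : ℝ)) := by
      rcases Real.sign_apply_eq (targetLoad T E - (load α n (α n i) : ℝ)) with h|h|h <;>
        rw [h] <;> norm_num
    simp only [benefit, hb, ha]
    nlinarith
end
end

section
/- Assume the DeepSeek step-size ε_k^(n) = u/|L − A_k^(n)| (equivalently p_k^(n+1) = p_k^(n) + u·sign(L − A_k^(n))) for a constant u > 0, that token i switched experts between iterations n and n+1 (α_{n+1}(i) ≠ α_n(i)), and that there are no ties in bias-shifted scores. Then the iteration-n score difference is bounded: −2u < (γ_{iα_{n+1}(i)} + p_{α_{n+1}(i)}^(n)) − (γ_{iα_n(i)} + p_{α_n(i)}^(n)) < 0. -/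
open Finset

noncomputable section

/-- **Theorem (DeepSeek switching, part 3).** If token `i` switched experts between
iterations `n` and `n+1`, then the iteration-`n` score difference is bounded:
`-2u < (γ_{i α_{n+1}(i)} + p_{α_{n+1}(i)}⁽ⁿ⁾) - (γ_{i α_n(i)} + p_{α_n(i)}⁽ⁿ⁾) < 0`. -/
theorem score_difference_bound (T E : ℕ) (hE : 0 < E) (hdvd : E ∣ T)
    (γ : Fin T → Fin E → ℝ) (p : ℕ → Fin E → ℝ) (α : ℕ → Fin T → Fin E)
    (u : ℝ) (hu : 0 < u)
    -- no ties in bias-shifted scores: at every iteration each token has a unique argmax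
    (hargmax : ∀ n (i : Fin T) (k : Fin E), k ≠ α n i →
      γ i k + p n k < γ i (α n i) + p n (α n i))
    -- DeepSeek dual update: `pₖ⁽ⁿ⁺¹⁾ = pₖ⁽ⁿ⁾ + u · sign(L - Aₖ⁽ⁿ⁾)`
    (hdual : ∀ n (k : Fin E),
      p (n+1) k = p n k + u * Real.sign (targetLoad T E - (load α n k : ℝ)))
    (n : ℕ) (i : Fin T) (hswitch : α (n+1) i ≠ α n i) :
    -(2 * u) < (γ i (α (n+1) i) + p n (α (n+1) i)) - (γ i (α n i) + p n (α n i))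
      ∧ (γ i (α (n+1) i) + p n (α (n+1) i)) - (γ i (α n i) + p n (α n i)) < 0 := by
  have habs : ∀ x : ℝ, -1 ≤ Real.sign x ∧ Real.sign x ≤ 1 := by
    intro x
    rcases lt_trichotomy x 0 with h | h | h
    · rw [Real.sign_of_neg h]; norm_num
    · rw [h, Real.sign_zero]; norm_num
    · rw [Real.sign_of_pos h]; norm_num
  constructor
  · have h1 := hargmax (n+1) i (α n i) hswitch.symm
    rw [hdual n (α n i), hdual n (α (n+1) i)] at h1
    have h2 := (habs (targetLoad T E - (load α n (α n i) : ℝ))).1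
    have h3 := (habs (targetLoad T E - (load α n (α (n+1) i) : ℝ))).2
    have h4 : -u ≤ u * Real.sign (targetLoad T E - (load α n (α n i) : ℝ)) :=
      by nlinarith
    have h5 : u * Real.sign (targetLoad T E - (load α n (α (n+1) i) : ℝ)) ≤ u :=
      by nlinarith
    linarith
  · have := hargmax n i (α (n+1) i) hswitch
    linarith
end
end

section
/- With the DeepSeek step-size ε_k^(n) = u/|L − A_k^(n)| (equivalently p_k^(n+1) = p_k^(n) + u·sign(L − A_k^(n))) for u > 0, and assuming no ties in bias-shifted scores: suppose at iteration n a set of experts K₁ has load ≥ L and the complementary set K₂ has load ≤ L, and at iteration n+1 the same sets remain in their respective loading states (experts in K₁ still have load ≥ L and experts in K₂ still have load ≤ L). If not all loads equal L at iteration n, then the Lagrangian strictly decreases: 𝓛(x^(n+1), p^(n+1)) − 𝓛(x^(n), p^(n)) < 0. -/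
open Finset

noncomputable section

/-- **Proposition (strict Lagrangian decrease).** Suppose at iteration `n` the experts in
`K₁` have load `≥ L` and the complementary experts have load `≤ L`, and at iteration
`n+1` the same sets remain in their respective loading states.  If not all loads
equal `L` at iteration `n`, then the Lagrangian strictly decreases. -/
theorem lagrangian_strict_decrease (T E : ℕ) (hE : 0 < E) (hdvd : E ∣ T)
    (γ : Fin T → Fin E → ℝ) (p : ℕ → Fin E → ℝ) (α : ℕ → Fin T → Fin E)
    (u : ℝ) (hu : 0 < u)
    -- no ties in bias-shifted scores: at every iteration each token has a unique argmax
    (hargmax : ∀ n (i : Fin T) (k : Fin E), k ≠ α n i →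
      γ i k + p n k < γ i (α n i) + p n (α n i))
    -- DeepSeek dual update: `pₖ⁽ⁿ⁺¹⁾ = pₖ⁽ⁿ⁾ + u · sign(L - Aₖ⁽ⁿ⁾)`
    (hdual : ∀ n (k : Fin E),
      p (n+1) k = p n k + u * Real.sign (targetLoad T E - (load α n k : ℝ)))
    (n : ℕ) (K₁ : Finset (Fin E))
    (hK1n : ∀ k ∈ K₁, targetLoad T E ≤ (load α n k : ℝ))
    (hK2n : ∀ k ∉ K₁, (load α n k : ℝ) ≤ targetLoad T E)
    (hK1n1 : ∀ k ∈ K₁, targetLoad T E ≤ (load α (n+1) k : ℝ))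
    (hK2n1 : ∀ k ∉ K₁, (load α (n+1) k : ℝ) ≤ targetLoad T E)
    (hnotbal : ∃ k : Fin E, (load α n k : ℝ) ≠ targetLoad T E) :
    lagrangian γ p α (n+1) - lagrangian γ p α n < 0 := by
  classical
  set L : ℝ := targetLoad T E with hL
  -- grouping sums over tokens into sums over experts
  have key : ∀ (m : ℕ) (f : Fin E → ℝ),
      ∑ i, f (α m i) = ∑ k, (load α m k : ℝ) * f k := by
    intro m f
    rw [← Finset.sum_fiberwise Finset.univ (α m) (fun i => f (α m i))]
    refine Finset.sum_congr rfl fun k _ => ?_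
    calc ∑ i ∈ Finset.univ.filter (fun i => α m i = k), f (α m i)
        = ∑ _i ∈ Finset.univ.filter (fun i => α m i = k), f k :=
          Finset.sum_congr rfl fun i hi => by rw [(Finset.mem_filter.mp hi).2]
      _ = (load α m k : ℝ) * f k := by rw [Finset.sum_const, load, nsmul_eq_mul]
  set S1 : ℝ := ∑ i, ((γ i (α (n+1) i) + p n (α (n+1) i)) - (γ i (α n i) + p n (α n i)))
    with hS1def
  set S2 : ℝ := ∑ k, (((load α (n+1) k : ℝ)) - L) * (p (n+1) k - p n k) with hS2def
  have hdiff : lagrangian γ p α (n+1) - lagrangian γ p α n = S1 + S2 := by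
    have e1 := key n (p n)
    have e2 := key (n+1) (p n)
    have e3 := key (n+1) (p (n+1))
    simp only [hS1def, hS2def, lagrangian, ← hL, sub_mul, mul_sub, Finset.mul_sum,
      Finset.sum_add_distrib, Finset.sum_sub_distrib, e1, e2, e3]
    ring
  have hS1le : ∀ i : Fin T,
      (γ i (α (n+1) i) + p n (α (n+1) i)) - (γ i (α n i) + p n (α n i)) ≤ 0 := by
    intro i
    by_cases h : α (n+1) i = α n i
    · rw [h]; simp
    · linarith [hargmax n i (α (n+1) i) h]
  have hS2le : ∀ k : Fin E, (((load α (n+1) k : ℝ)) - L) * (p (n+1) k - p n k) ≤ 0 := by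
    intro k
    rw [hdual n k, show p n k + u * Real.sign (L - (load α n k : ℝ)) - p n k
        = u * Real.sign (L - (load α n k : ℝ)) by ring]
    by_cases hk : k ∈ K₁
    · have h1 := hK1n k hk
      have h2 := hK1n1 k hk
      rcases eq_or_lt_of_le h1 with heq | hlt
      · rw [show L - (load α n k : ℝ) = 0 by linarith, Real.sign_zero]; simp
      · rw [Real.sign_of_neg (by linarith : L - (load α n k : ℝ) < 0)]
        nlinarith
    · have h1 := hK2n k hk
      have h2 := hK2n1 k hk
      rcases eq_or_lt_of_le h1 with heq | hlt
      · rw [show L - (load α n k : ℝ) = 0 by linarith, Real.sign_zero]; simp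
      · rw [Real.sign_of_pos (by linarith : 0 < L - (load α n k : ℝ))]
        nlinarith
  have hS1 : S1 ≤ 0 := by
    rw [hS1def]
    exact Finset.sum_nonpos fun i _ => hS1le i
  have hS2 : S2 ≤ 0 := by
    rw [hS2def]
    exact Finset.sum_nonpos fun k _ => hS2le k
  rw [hdiff]
  by_cases hswitch : ∀ i : Fin T, α (n+1) i = α n i
  · -- no token switches: loads are unchanged, so S2 < 0 at the unbalanced expert
    obtain ⟨k₀, hk₀⟩ := hnotbal
    have hload : load α (n+1) k₀ = load α n k₀ := by
      unfold load
      apply congrArg Finset.card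
      ext i
      simp [hswitch i]
    have hterm : (((load α (n+1) k₀ : ℝ)) - L) * (p (n+1) k₀ - p n k₀) < 0 := by
      rw [hload, hdual n k₀]
      rw [show p n k₀ + u * Real.sign (L - (load α n k₀ : ℝ)) - p n k₀
          = u * Real.sign (L - (load α n k₀ : ℝ)) by ring]
      rcases lt_or_gt_of_ne hk₀ with hlt | hgt
      · rw [Real.sign_of_pos (by linarith : 0 < L - (load α n k₀ : ℝ))]
        nlinarith
      · rw [Real.sign_of_neg (by linarith : L - (load α n k₀ : ℝ) < 0)]
        nlinarith
    have : S2 < 0 := by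
      rw [hS2def]
      calc ∑ k, (((load α (n+1) k : ℝ)) - L) * (p (n+1) k - p n k)
          < ∑ _k : Fin E, (0 : ℝ) :=
            Finset.sum_lt_sum (fun k _ => hS2le k) ⟨k₀, Finset.mem_univ _, hterm⟩
        _ = 0 := by simp
    linarith
  · -- some token switches: S1 < 0
    push_neg at hswitch
    obtain ⟨i₀, hi₀⟩ := hswitch
    have hterm : (γ i₀ (α (n+1) i₀) + p n (α (n+1) i₀))
        - (γ i₀ (α n i₀) + p n (α n i₀)) < 0 := by
      linarith [hargmax n i₀ (α (n+1) i₀) hi₀]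
    have : S1 < 0 := by
      rw [hS1def]
      calc ∑ i, ((γ i (α (n+1) i) + p n (α (n+1) i)) - (γ i (α n i) + p n (α n i)))
          < ∑ _i : Fin T, (0 : ℝ) :=
            Finset.sum_lt_sum (fun i _ => hS1le i) ⟨i₀, Finset.mem_univ _, hterm⟩
        _ = 0 := by simp
    linarith
end
end

section
/- With the DeepSeek step-size ε_k^(n) = u/|L − A_k^(n)| (equivalently p_k^(n+1) = p_k^(n) + u·sign(L − A_k^(n))) for u > 0, and assuming no ties in bias-shifted scores: if two tokens i and j both switched between iterations n and n+1 from the same origin expert α_n to the same destination expert α_{n+1}, then their score gaps relative to those experts satisfy |𝔊γ^i_{α_{n+1}α_n} − 𝔊γ^j_{α_{n+1}α_n}| < 2u, where 𝔊γ^i_{k'k} := γ_{ik'} − γ_{ik}. -/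
open Finset

noncomputable section

/-- **Proposition (concurrent switchers have close score gaps).** If tokens `i` and `j`
both switched between iterations `n` and `n+1` from the same origin expert to the same
destination expert, then `|𝔊γ^i_{α_{n+1}α_n} - 𝔊γ^j_{α_{n+1}α_n}| < 2u`,
where `𝔊γ^i_{k'k} = γ_{ik'} - γ_{ik}`. -/
theorem concurrent_switch_gap_bound (T E : ℕ) (hE : 0 < E) (hdvd : E ∣ T)
    (γ : Fin T → Fin E → ℝ) (p : ℕ → Fin E → ℝ) (α : ℕ → Fin T → Fin E)
    (u : ℝ) (hu : 0 < u)
    -- no ties in bias-shifted scores: at every iteration each token has a unique argmax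
    (hargmax : ∀ n (i : Fin T) (k : Fin E), k ≠ α n i →
      γ i k + p n k < γ i (α n i) + p n (α n i))
    -- DeepSeek dual update: `pₖ⁽ⁿ⁺¹⁾ = pₖ⁽ⁿ⁾ + u · sign(L - Aₖ⁽ⁿ⁾)`
    (hdual : ∀ n (k : Fin E),
      p (n+1) k = p n k + u * Real.sign (targetLoad T E - (load α n k : ℝ)))
    (n : ℕ) (i j : Fin T)
    (hswitchi : α (n+1) i ≠ α n i) (hswitchj : α (n+1) j ≠ α n j)
    (horig : α n i = α n j) (hdest : α (n+1) i = α (n+1) j) :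
    |(γ i (α (n+1) i) - γ i (α n i)) - (γ j (α (n+1) i) - γ j (α n i))| < 2 * u := by
  set k := α n i with hk
  set k' := α (n+1) i with hk'
  -- inequalities at iteration n
  have h1 : γ i k' + p n k' < γ i k + p n k := hargmax n i k' hswitchi
  have h2 : γ j k' + p n k' < γ j k + p n k := by
    have := hargmax n j k' (by rw [hdest]; exact hswitchj)
    rwa [← horig] at this
  -- inequalities at iteration n+1
  have h3 : γ i k + p (n+1) k < γ i k' + p (n+1) k' := by
    have := hargmax (n+1) i k hswitchi.symm
    rwa [← hk'] at this
  have h4 : γ j k + p (n+1) k < γ j k' + p (n+1) k' := by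
    have := hargmax (n+1) j k (by rw [← hdest]; exact hswitchi.symm)
    rwa [← hdest] at this
  have hdk := hdual n k
  have hdk' := hdual n k'
  set s1 := Real.sign (targetLoad T E - (load α n k : ℝ)) with hs1
  set s2 := Real.sign (targetLoad T E - (load α n k' : ℝ)) with hs2
  have hb1 : |s1| ≤ 1 := by
    rcases Real.sign_apply_eq (targetLoad T E - (load α n k : ℝ)) with h | h | h <;>
      rw [← hs1] at h <;> rw [h] <;> norm_num
  have hb2 : |s2| ≤ 1 := by
    rcases Real.sign_apply_eq (targetLoad T E - (load α n k' : ℝ)) with h | h | h <;>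
      rw [← hs2] at h <;> rw [h] <;> norm_num
  rw [abs_le] at hb1 hb2
  have hm1 : u * (s2 - s1) ≤ 2 * u := by nlinarith [hb1.1, hb1.2, hb2.1, hb2.2]
  have hm2 : u * (s1 - s2) ≤ 2 * u := by nlinarith [hb1.1, hb1.2, hb2.1, hb2.2]
  rw [abs_lt]
  constructor <;> linarith
end
end

section
/- With the DeepSeek step-size ε_k^(n) = u/|L − A_k^(n)| (equivalently p_k^(n+1) = p_k^(n) + u·sign(L − A_k^(n))), assuming no ties in bias-shifted scores and a constant step parameter u < ū, where ū := (1/2) min over all pairs of distinct experts k, k' and distinct tokens i, j of |𝔊γ^i_{kk'} − 𝔊γ^j_{kk'}|: no two distinct tokens move between the same pair of origin and destination experts between two consecutive iterations; that is, if tokens i ≠ j both switch from iteration n to n+1, then (α_n(i), α_{n+1}(i)) ≠ (α_n(j), α_{n+1}(j)). -/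
open Finset

noncomputable section

lemma abs_sign_le_one (x : ℝ) : |Real.sign x| ≤ 1 := by
  rcases lt_trichotomy x 0 with h | h | h
  · rw [Real.sign_of_neg h]; norm_num
  · rw [h, Real.sign_zero]; norm_num
  · rw [Real.sign_of_pos h]; norm_num

/-- **Corollary (unique token movements).** With a constant step parameter `u < ū`,
no two distinct tokens move between the same pair of origin and destination experts
in two consecutive iterations. -/
theorem no_duplicate_moves (T E : ℕ) (hE : 0 < E) (hdvd : E ∣ T)
    (γ : Fin T → Fin E → ℝ) (p : ℕ → Fin E → ℝ) (α : ℕ → Fin T → Fin E)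
    (u : ℝ) (hu : 0 < u)
    -- no ties in bias-shifted scores: at every iteration each token has a unique argmax
    (hargmax : ∀ n (i : Fin T) (k : Fin E), k ≠ α n i →
      γ i k + p n k < γ i (α n i) + p n (α n i))
    -- DeepSeek dual update: `pₖ⁽ⁿ⁺¹⁾ = pₖ⁽ⁿ⁾ + u · sign(L - Aₖ⁽ⁿ⁾)`
    (hdual : ∀ n (k : Fin E),
      p (n+1) k = p n k + u * Real.sign (targetLoad T E - (load α n k : ℝ)))
-- `u < ū`, where `ū = ½ min_{k ≠ k', i ≠ j} |𝔊γ^i_{kk'} - 𝔊γ^j_{kk'}|`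
    (husmall : ∀ k k' : Fin E, k ≠ k' → ∀ i j : Fin T, i ≠ j →
      2 * u < |(γ i k - γ i k') - (γ j k - γ j k')|)
    (n : ℕ) (i j : Fin T) (hij : i ≠ j)
    (hswitchi : α (n+1) i ≠ α n i) (hswitchj : α (n+1) j ≠ α n j) :
    (α n i, α (n+1) i) ≠ (α n j, α (n+1) j) := by
  intro h
  rw [Prod.mk.injEq] at h
  obtain ⟨hA, hB⟩ := h
  have ha1 := hargmax n i (α (n+1) i) hswitchi
  have ha2 := hargmax (n+1) i (α n i) (Ne.symm hswitchi)
  have ha3 := hargmax n j (α (n+1) j) hswitchj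
  have ha4 := hargmax (n+1) j (α n j) (Ne.symm hswitchj)
  rw [← hA, ← hB] at ha3 ha4
  rw [hdual n (α n i), hdual n (α (n+1) i)] at ha2 ha4
  have hs1 := abs_sign_le_one (targetLoad T E - (load α n (α n i) : ℝ))
  have hs2 := abs_sign_le_one (targetLoad T E - (load α n (α (n+1) i) : ℝ))
  rw [abs_le] at hs1 hs2
  have hb1 : u * (targetLoad T E - (load α n (α n i) : ℝ)).sign ≤ u :=
    by nlinarith [hs1.2]
  have hb2 : -u ≤ u * (targetLoad T E - (load α n (α n i) : ℝ)).sign :=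
    by nlinarith [hs1.1]
  have hb3 : u * (targetLoad T E - (load α n (α (n+1) i) : ℝ)).sign ≤ u :=
    by nlinarith [hs2.2]
  have hb4 : -u ≤ u * (targetLoad T E - (load α n (α (n+1) i) : ℝ)).sign :=
    by nlinarith [hs2.1]
  have hmin := husmall (α n i) (α (n+1) i) (Ne.symm hswitchi) i j hij
  rcases abs_cases ((γ i (α n i) - γ i (α (n+1) i)) - (γ j (α n i) - γ j (α (n+1) i))) with ⟨he, _⟩ | ⟨he, _⟩ <;>
    rw [he] at hmin <;> linarith
end
end

section
/- With the DeepSeek step-size ε_k^(n) = u/|L − A_k^(n)| (equivalently p_k^(n+1) = p_k^(n) + u·sign(L − A_k^(n))), assuming no ties in bias-shifted scores and a constant step parameter u < ū, where ū := (1/2) min over all pairs of distinct experts k, k' and distinct tokens i, j of |𝔊γ^i_{kk'} − 𝔊γ^j_{kk'}|: an expert's load cannot change by more than E − 1 tokens between two consecutive iterations, i.e., |A_k^(n+1) − A_k^(n)| ≤ E − 1 for every expert k. -/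
open Finset

noncomputable section

/-- **Corollary (bounded load change).** With a constant step parameter `u < ū`, an
expert's load cannot change by more than `E - 1` tokens between consecutive iterations. -/
theorem load_change_bound (T E : ℕ) (hE : 0 < E) (hdvd : E ∣ T)
    (γ : Fin T → Fin E → ℝ) (p : ℕ → Fin E → ℝ) (α : ℕ → Fin T → Fin E)
    (u : ℝ) (hu : 0 < u)
    -- no ties in bias-shifted scores: at every iteration each token has a unique argmax
    (hargmax : ∀ n (i : Fin T) (k : Fin E), k ≠ α n i →
      γ i k + p n k < γ i (α n i) + p n (α n i))
    -- DeepSeek dual update: `pₖ⁽ⁿ⁺¹⁾ = pₖ⁽ⁿ⁾ + u · sign(L - Aₖ⁽ⁿ⁾)`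
    (hdual : ∀ n (k : Fin E),
      p (n+1) k = p n k + u * Real.sign (targetLoad T E - (load α n k : ℝ)))
-- `u < ū`, where `ū = ½ min_{k ≠ k', i ≠ j} |𝔊γ^i_{kk'} - 𝔊γ^j_{kk'}|`
    (husmall : ∀ k k' : Fin E, k ≠ k' → ∀ i j : Fin T, i ≠ j →
      2 * u < |(γ i k - γ i k') - (γ j k - γ j k')|)
    (n : ℕ) (k : Fin E) :
    |(load α (n+1) k : ℤ) - (load α n k : ℤ)| ≤ (E : ℤ) - 1 := by
  classical
  -- the bias change between consecutive steps is at most `u` in absolute value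
  have hδ : ∀ m : Fin E, |p (n+1) m - p n m| ≤ u := by
    intro m
    rw [hdual n m]
    have h1 : |Real.sign (targetLoad T E - (load α n m : ℝ))| ≤ 1 := by
      rcases Real.sign_apply_eq (targetLoad T E - (load α n m : ℝ)) with h | h | h <;>
        rw [h] <;> norm_num
    calc |p n m + u * Real.sign (targetLoad T E - (load α n m : ℝ)) - p n m|
        = |u| * |Real.sign (targetLoad T E - (load α n m : ℝ))| := by
          rw [← abs_mul]; ring_nf
      _ ≤ |u| * 1 := by
          exact mul_le_mul_of_nonneg_left h1 (abs_nonneg u)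
      _ = u := by rw [mul_one, abs_of_pos hu]
  -- at most one token can move from expert `a` to expert `b` in one step
  have move_inj : ∀ (a b : Fin E), a ≠ b → ∀ i j : Fin T,
      α n i = a → α (n+1) i = b → α n j = a → α (n+1) j = b → i = j := by
    intro a b hab i j hia hib hja hjb
    by_contra hij
    have hbound : ∀ x : Fin T, α n x = a → α (n+1) x = b →
        p (n+1) a - p (n+1) b < γ x b - γ x a ∧ γ x b - γ x a < p n a - p n b := by
      intro x hxa hxb
      constructor
      · have := hargmax (n+1) x a (by rw [hxb]; exact hab)
        rw [hxb] at this; linarith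
      · have := hargmax n x b (by rw [hxa]; exact fun h => hab h.symm)
        rw [hxa] at this; linarith
    have hd : p n a - p n b - (p (n+1) a - p (n+1) b) ≤ 2 * u := by
      have ha := hδ a
      have hb := hδ b
      have ha' := abs_le.mp ha
      have hb' := abs_le.mp hb
      linarith [ha'.1, ha'.2, hb'.1, hb'.2]
    have hi := hbound i hia hib
    have hj := hbound j hja hjb
    have hsmall := husmall b a (fun h => hab h.symm) i j hij
    have : |(γ i b - γ i a) - (γ j b - γ j a)| < 2 * u := by
      rw [abs_lt]; constructor <;> linarith [hi.1, hi.2, hj.1, hj.2]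
    linarith
  -- split loads by the other iteration's assignment
  have hsplit : ∀ (m m' : ℕ), load α m k =
      (Finset.univ.filter fun i => α m i = k ∧ α m' i = k).card +
      (Finset.univ.filter fun i => α m i = k ∧ α m' i ≠ k).card := by
    intro m m'
    rw [load]
    rw [← Finset.filter_filter, ← Finset.filter_filter,
      Finset.card_filter_add_card_filter_not]
  have h1 := hsplit (n+1) n
  have h2 := hsplit n (n+1)
  have hcomm : (Finset.univ.filter fun i => α (n+1) i = k ∧ α n i = k).card =
      (Finset.univ.filter fun i => α n i = k ∧ α (n+1) i = k).card := by
    congr 1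
    ext i
    simp [and_comm]
  -- bound the moving sets
  have hcardbound : ∀ (m m' : ℕ), (∀ a b : Fin E, a ≠ b → ∀ i j : Fin T,
      α m i = a → α m' i = b → α m j = a → α m' j = b → i = j) →
      (Finset.univ.filter fun i => α m' i = k ∧ α m i ≠ k).card ≤ E - 1 := by
    intro m m' hmi
    have hinj : Set.InjOn (α m) ((Finset.univ.filter fun i => α m' i = k ∧ α m i ≠ k) : Finset (Fin T)) := by
      intro i hi j hj hij
      simp only [Finset.coe_filter, Set.mem_setOf_eq, Finset.mem_univ, true_and] at hi hj
      exact hmi (α m i) k hi.2 i j rfl hi.1 (hij.symm) hj.1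
    have hmaps : ∀ i ∈ (Finset.univ.filter fun i => α m' i = k ∧ α m i ≠ k),
        α m i ∈ Finset.univ.erase k := by
      intro i hi
      simp only [Finset.mem_filter] at hi
      exact Finset.mem_erase.mpr ⟨hi.2.2, Finset.mem_univ _⟩
    have := Finset.card_le_card_of_injOn (α m) hmaps hinj
    calc (Finset.univ.filter fun i => α m' i = k ∧ α m i ≠ k).card
        ≤ (Finset.univ.erase k).card := this
      _ = E - 1 := by rw [Finset.card_erase_of_mem (Finset.mem_univ k)]; simp
  have hin : (Finset.univ.filter fun i => α (n+1) i = k ∧ α n i ≠ k).card ≤ E - 1 :=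
    hcardbound n (n+1) (fun a b hab i j => move_inj a b hab i j)
  have hout : (Finset.univ.filter fun i => α n i = k ∧ α (n+1) i ≠ k).card ≤ E - 1 :=
    hcardbound (n+1) n (fun a b hab i j h1 h2 h3 h4 => move_inj b a (fun h => hab h.symm) i j h2 h1 h4 h3)
  rw [h1, h2, hcomm] at *
  rw [abs_le]
  omega
end
end

section
/- With the DeepSeek step-size ε_k^(n) = u/|L − A_k^(n)| (equivalently p_k^(n+1) = p_k^(n) + u·sign(L − A_k^(n))), assuming no ties in bias-shifted scores and a constant step parameter u < ū, where ū := (1/2) min over all pairs of distinct experts k, k' and distinct tokens i, j of |𝔊γ^i_{kk'} − 𝔊γ^j_{kk'}|: the load of every expert converges into the range [L − (E−1), L + (E−1)]; that is, there exists an iteration N such that for all n ≥ N and every expert k, L − (E−1) ≤ A_k^(n) ≤ L + (E−1). -/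
open Finset

noncomputable section

namespace ApproxBalAux

lemma sign_le_one (x : ℝ) : Real.sign x ≤ 1 := by
  rcases lt_trichotomy x 0 with h | h | h
  · rw [Real.sign_of_neg h]; norm_num
  · rw [h, Real.sign_zero]; norm_num
  · rw [Real.sign_of_pos h]

lemma neg_one_le_sign (x : ℝ) : -1 ≤ Real.sign x := by
  rcases lt_trichotomy x 0 with h | h | h
  · rw [Real.sign_of_neg h]
  · rw [h, Real.sign_zero]; norm_num
  · rw [Real.sign_of_pos h]; norm_num

lemma tl_eq {T E : ℕ} (hE : 0 < E) (hdvd : E ∣ T) :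
    targetLoad T E = ((T / E : ℕ) : ℝ) := by
  have hE' : (E : ℝ) ≠ 0 := Nat.cast_ne_zero.mpr hE.ne'
  have h : (T : ℝ) = ((T / E : ℕ) : ℝ) * (E : ℝ) := by
    exact_mod_cast (Nat.div_mul_cancel hdvd).symm
  rw [targetLoad, h, mul_div_assoc, div_self hE', mul_one]

lemma sum_load {T E : ℕ} (α : ℕ → Fin T → Fin E) (n : ℕ) :
    ∑ k, load α n k = T := by
  classical
  have h := Finset.card_eq_sum_card_fiberwise
    (f := α n) (s := Finset.univ) (t := Finset.univ) (fun x _ => Finset.mem_univ _)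
  simp only [Finset.card_univ, Fintype.card_fin] at h
  simp only [load]
  exact h.symm

lemma load_le {T E : ℕ} (α : ℕ → Fin T → Fin E) (n : ℕ) (k : Fin E) :
    load α n k ≤ T := by
  refine (Finset.card_filter_le _ _).trans (le_of_eq ?_)
  simp [Finset.card_univ]


section Core

variable {T E : ℕ} {γ : Fin T → Fin E → ℝ} {p : ℕ → Fin E → ℝ}
  {α : ℕ → Fin T → Fin E} {u : ℝ}

lemma switch_sign (hu : 0 < u)
    (hargmax : ∀ n (i : Fin T) (k : Fin E), k ≠ α n i →
      γ i k + p n k < γ i (α n i) + p n (α n i))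
    (hdual : ∀ n (k : Fin E),
      p (n+1) k = p n k + u * Real.sign (targetLoad T E - (load α n k : ℝ)))
    {n : ℕ} {i : Fin T} {k k' : Fin E}
    (h1 : α n i = k) (h2 : α (n+1) i = k') (hkk' : k ≠ k') :
    Real.sign (targetLoad T E - (load α n k : ℝ)) <
      Real.sign (targetLoad T E - (load α n k' : ℝ)) := by
  have hA : γ i k' + p n k' < γ i k + p n k := by
    have h := hargmax n i k' (by rw [h1]; exact hkk'.symm)
    rwa [h1] at h
  have hB : γ i k + p (n+1) k < γ i k' + p (n+1) k' := by
    have h := hargmax (n+1) i k (by rw [h2]; exact hkk')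
    rwa [h2] at h
  rw [hdual n k, hdual n k'] at hB
  have hmul : u * Real.sign (targetLoad T E - (load α n k : ℝ)) <
      u * Real.sign (targetLoad T E - (load α n k' : ℝ)) := by linarith
  exact lt_of_mul_lt_mul_left (by linarith) hu.le

lemma switch_unique (hu : 0 < u)
    (hargmax : ∀ n (i : Fin T) (k : Fin E), k ≠ α n i →
      γ i k + p n k < γ i (α n i) + p n (α n i))
    (hdual : ∀ n (k : Fin E),
      p (n+1) k = p n k + u * Real.sign (targetLoad T E - (load α n k : ℝ)))
    (husmall : ∀ k k' : Fin E, k ≠ k' → ∀ i j : Fin T, i ≠ j →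
      2 * u < |(γ i k - γ i k') - (γ j k - γ j k')|)
    {n : ℕ} {k k' : Fin E} (hkk' : k ≠ k') {i j : Fin T}
    (hi1 : α n i = k) (hi2 : α (n+1) i = k')
    (hj1 : α n j = k) (hj2 : α (n+1) j = k') : i = j := by
  by_contra hij
  have hAi : γ i k' + p n k' < γ i k + p n k := by
    have h := hargmax n i k' (by rw [hi1]; exact hkk'.symm); rwa [hi1] at h
  have hBi : γ i k + p (n+1) k < γ i k' + p (n+1) k' := by
    have h := hargmax (n+1) i k (by rw [hi2]; exact hkk'); rwa [hi2] at h
  have hAj : γ j k' + p n k' < γ j k + p n k := by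
    have h := hargmax n j k' (by rw [hj1]; exact hkk'.symm); rwa [hj1] at h
  have hBj : γ j k + p (n+1) k < γ j k' + p (n+1) k' := by
    have h := hargmax (n+1) j k (by rw [hj2]; exact hkk'); rwa [hj2] at h
  rw [hdual n k, hdual n k'] at hBi hBj
  have habs := husmall k k' hkk' i j hij
  have hs1 : Real.sign (targetLoad T E - (load α n k' : ℝ)) ≤ 1 := sign_le_one _
  have hs2 : -1 ≤ Real.sign (targetLoad T E - (load α n k : ℝ)) := neg_one_le_sign _
  have hbound : u * Real.sign (targetLoad T E - (load α n k' : ℝ)) -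
      u * Real.sign (targetLoad T E - (load α n k : ℝ)) ≤ 2 * u := by nlinarith
  have hcon : |(γ i k - γ i k') - (γ j k - γ j k')| < 2 * u := by
    rw [abs_lt]; constructor <;> linarith
  linarith

lemma under_subset (hu : 0 < u)
    (hargmax : ∀ n (i : Fin T) (k : Fin E), k ≠ α n i →
      γ i k + p n k < γ i (α n i) + p n (α n i))
    (hdual : ∀ n (k : Fin E),
      p (n+1) k = p n k + u * Real.sign (targetLoad T E - (load α n k : ℝ)))
    (hE : 0 < E) (hdvd : E ∣ T)
    {n : ℕ} {k : Fin E} (hlt : load α n k < T / E) :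
    load α n k ≤ load α (n+1) k := by
  classical
  refine Finset.card_le_card ?_
  intro i hi
  have hik : α n i = k := (Finset.mem_filter.mp hi).2
  refine Finset.mem_filter.mpr ⟨Finset.mem_univ _, ?_⟩
  by_contra hnot
  have hs := switch_sign hu hargmax hdual hik rfl (fun h => hnot h.symm)
  have h1 : Real.sign (targetLoad T E - (load α n k : ℝ)) = 1 := by
    apply Real.sign_of_pos
    rw [tl_eq hE hdvd]
    have : (load α n k : ℝ) < ((T / E : ℕ) : ℝ) := by exact_mod_cast hlt
    linarith
  have h2 := sign_le_one (targetLoad T E - (load α n (α (n+1) i) : ℝ))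
  rw [h1] at hs; linarith

lemma over_subset (hu : 0 < u)
    (hargmax : ∀ n (i : Fin T) (k : Fin E), k ≠ α n i →
      γ i k + p n k < γ i (α n i) + p n (α n i))
    (hdual : ∀ n (k : Fin E),
      p (n+1) k = p n k + u * Real.sign (targetLoad T E - (load α n k : ℝ)))
    (hE : 0 < E) (hdvd : E ∣ T)
    {n : ℕ} {k : Fin E} (hgt : T / E < load α n k) :
    load α (n+1) k ≤ load α n k := by
  classical
  refine Finset.card_le_card ?_
  intro i hi
  have hik : α (n+1) i = k := (Finset.mem_filter.mp hi).2
  refine Finset.mem_filter.mpr ⟨Finset.mem_univ _, ?_⟩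
  by_contra hnot
  have hs := switch_sign hu hargmax hdual rfl hik hnot
  have h1 : Real.sign (targetLoad T E - (load α n k : ℝ)) = -1 := by
    apply Real.sign_of_neg
    rw [tl_eq hE hdvd]
    have : ((T / E : ℕ) : ℝ) < (load α n k : ℝ) := by exact_mod_cast hgt
    linarith
  have h2 := neg_one_le_sign (targetLoad T E - (load α n (α n i) : ℝ))
  rw [h1] at hs; linarith

lemma load_next_le (hu : 0 < u)
    (hargmax : ∀ n (i : Fin T) (k : Fin E), k ≠ α n i →
      γ i k + p n k < γ i (α n i) + p n (α n i))
    (hdual : ∀ n (k : Fin E),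
      p (n+1) k = p n k + u * Real.sign (targetLoad T E - (load α n k : ℝ)))
    (husmall : ∀ k k' : Fin E, k ≠ k' → ∀ i j : Fin T, i ≠ j →
      2 * u < |(γ i k - γ i k') - (γ j k - γ j k')|)
    (n : ℕ) (k : Fin E) :
    load α (n+1) k ≤ load α n k + (E - 1) := by
  classical
  set S1 := Finset.univ.filter (fun i => α n i = k) with hS1
  set S2 := Finset.univ.filter (fun i => α (n+1) i = k) with hS2
  have hsub : S2 ⊆ S1 ∪ (S2 \ S1) := by
    intro i hi
    by_cases h : i ∈ S1
    · exact Finset.mem_union_left _ h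
    · exact Finset.mem_union_right _ (Finset.mem_sdiff.mpr ⟨hi, h⟩)
  have hinc : (S2 \ S1).card ≤ E - 1 := by
    have hmap : ∀ a ∈ S2 \ S1, α n a ∈ Finset.univ.erase k := by
      intro a ha
      have h1 : α n a ≠ k := fun h =>
        (Finset.mem_sdiff.mp ha).2 (Finset.mem_filter.mpr ⟨Finset.mem_univ _, h⟩)
      exact Finset.mem_erase.mpr ⟨h1, Finset.mem_univ _⟩
    have hinj : Set.InjOn (fun a => α n a) (↑(S2 \ S1) : Set (Fin T)) := by
      intro a ha b hb hab
      simp only at hab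
      have ha' := Finset.mem_sdiff.mp (Finset.mem_coe.mp ha)
      have hb' := Finset.mem_sdiff.mp (Finset.mem_coe.mp hb)
      have h2a : α (n+1) a = k := (Finset.mem_filter.mp ha'.1).2
      have h2b : α (n+1) b = k := (Finset.mem_filter.mp hb'.1).2
      have h1a : α n a ≠ k := fun h =>
        ha'.2 (Finset.mem_filter.mpr ⟨Finset.mem_univ _, h⟩)
      exact switch_unique hu hargmax hdual husmall h1a rfl h2a hab.symm h2b
    have := Finset.card_le_card_of_injOn (fun a => α n a) hmap hinj
    rwa [Finset.card_erase_of_mem (Finset.mem_univ k), Finset.card_univ,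
      Fintype.card_fin] at this
  calc load α (n+1) k = S2.card := rfl
    _ ≤ (S1 ∪ (S2 \ S1)).card := Finset.card_le_card hsub
    _ ≤ S1.card + (S2 \ S1).card := Finset.card_union_le _ _
    _ ≤ load α n k + (E - 1) := by
        have : S1.card = load α n k := rfl
        omega

lemma load_next_ge (hu : 0 < u)
    (hargmax : ∀ n (i : Fin T) (k : Fin E), k ≠ α n i →
      γ i k + p n k < γ i (α n i) + p n (α n i))
    (hdual : ∀ n (k : Fin E),
      p (n+1) k = p n k + u * Real.sign (targetLoad T E - (load α n k : ℝ)))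
    (husmall : ∀ k k' : Fin E, k ≠ k' → ∀ i j : Fin T, i ≠ j →
      2 * u < |(γ i k - γ i k') - (γ j k - γ j k')|)
    (n : ℕ) (k : Fin E) :
    load α n k ≤ load α (n+1) k + (E - 1) := by
  classical
  set S1 := Finset.univ.filter (fun i => α n i = k) with hS1
  set S2 := Finset.univ.filter (fun i => α (n+1) i = k) with hS2
  have hsub : S1 ⊆ S2 ∪ (S1 \ S2) := by
    intro i hi
    by_cases h : i ∈ S2
    · exact Finset.mem_union_left _ h
    · exact Finset.mem_union_right _ (Finset.mem_sdiff.mpr ⟨hi, h⟩)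
  have hinc : (S1 \ S2).card ≤ E - 1 := by
    have hmap : ∀ a ∈ S1 \ S2, α (n+1) a ∈ Finset.univ.erase k := by
      intro a ha
      have h1 : α (n+1) a ≠ k := fun h =>
        (Finset.mem_sdiff.mp ha).2 (Finset.mem_filter.mpr ⟨Finset.mem_univ _, h⟩)
      exact Finset.mem_erase.mpr ⟨h1, Finset.mem_univ _⟩
    have hinj : Set.InjOn (fun a => α (n+1) a) (↑(S1 \ S2) : Set (Fin T)) := by
      intro a ha b hb hab
      simp only at hab
      have ha' := Finset.mem_sdiff.mp (Finset.mem_coe.mp ha)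
      have hb' := Finset.mem_sdiff.mp (Finset.mem_coe.mp hb)
      have h1a : α n a = k := (Finset.mem_filter.mp ha'.1).2
      have h1b : α n b = k := (Finset.mem_filter.mp hb'.1).2
      have h2a : α (n+1) a ≠ k := fun h =>
        ha'.2 (Finset.mem_filter.mpr ⟨Finset.mem_univ _, h⟩)
      exact switch_unique hu hargmax hdual husmall
        (fun h => h2a h.symm) h1a rfl h1b hab.symm
    have := Finset.card_le_card_of_injOn (fun a => α (n+1) a) hmap hinj
    rwa [Finset.card_erase_of_mem (Finset.mem_univ k), Finset.card_univ,
      Fintype.card_fin] at this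
  calc load α n k = S1.card := rfl
    _ ≤ (S2 ∪ (S1 \ S2)).card := Finset.card_le_card hsub
    _ ≤ S2.card + (S1 \ S2).card := Finset.card_union_le _ _
    _ ≤ load α (n+1) k + (E - 1) := by
        have : S2.card = load α (n+1) k := rfl
        omega

lemma load_eq_zero_of_far
    (hargmax : ∀ n (i : Fin T) (k : Fin E), k ≠ α n i →
      γ i k + p n k < γ i (α n i) + p n (α n i))
    {Γ : ℝ} (hΓ : ∀ (i : Fin T) (kk : Fin E), |γ i kk| ≤ Γ) (hΓ0 : 0 ≤ Γ)
    {n : ℕ} {a b : Fin E} (hfar : 2 * Γ < p n a - p n b) : load α n b = 0 := by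
  classical
  have hab : a ≠ b := by
    rintro rfl; simp at hfar; linarith
  rw [load, Finset.card_eq_zero, Finset.filter_eq_empty_iff]
  intro i _
  intro hbi
  have h := hargmax n i a (by rw [hbi]; exact hab)
  rw [hbi] at h
  have h1 := abs_le.mp (hΓ i a)
  have h2 := abs_le.mp (hΓ i b)
  linarith

end Core


section Reach

variable {T E : ℕ} {γ : Fin T → Fin E → ℝ} {p : ℕ → Fin E → ℝ}
  {α : ℕ → Fin T → Fin E} {u : ℝ}

lemma reach_le (hE : 0 < E) (hdvd : E ∣ T) (hu : 0 < u)
    (hargmax : ∀ n (i : Fin T) (k : Fin E), k ≠ α n i →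
      γ i k + p n k < γ i (α n i) + p n (α n i))
    (hdual : ∀ n (k : Fin E),
      p (n+1) k = p n k + u * Real.sign (targetLoad T E - (load α n k : ℝ)))
    (k : Fin E) (N : ℕ) :
    ∃ n, N ≤ n ∧ load α n k ≤ T / E := by
  classical
  by_contra hcon
  push_neg at hcon
  have hover : ∀ n, N ≤ n → T / E < load α n k := hcon
  have hT : 0 < T :=
    lt_of_le_of_lt (Nat.zero_le _) (lt_of_lt_of_le (hover N le_rfl) (load_le α N k))
  obtain ⟨i0⟩ : Nonempty (Fin T) := ⟨⟨0, hT⟩⟩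
  -- uniform bound on scores
  set ΓS := (Finset.univ : Finset (Fin T × Fin E)).image fun q => |γ q.1 q.2| with hΓS
  have hne : ΓS.Nonempty := ⟨|γ i0 k|, Finset.mem_image.mpr ⟨(i0, k), Finset.mem_univ _, rfl⟩⟩
  set Γ := ΓS.max' hne with hΓdef
  have hΓ : ∀ (i : Fin T) (kk : Fin E), |γ i kk| ≤ Γ := by
    intro i kk
    have hmem : |γ i kk| ∈ ΓS := Finset.mem_image.mpr ⟨(i, kk), Finset.mem_univ _, rfl⟩
    exact Finset.le_max' ΓS _ hmem
  have hΓ0 : 0 ≤ Γ := le_trans (abs_nonneg _) (hΓ i0 k)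
  have hsk : ∀ n, N ≤ n → Real.sign (targetLoad T E - (load α n k : ℝ)) = -1 := by
    intro n hn
    apply Real.sign_of_neg
    rw [tl_eq hE hdvd]
    have : ((T / E : ℕ) : ℝ) < (load α n k : ℝ) := by exact_mod_cast hover n hn
    linarith
  have hdle : ∀ n, N ≤ n → ∀ k' : Fin E, p n k' - p n k ≤ 2 * Γ := by
    intro n hn k'
    by_contra h
    push_neg at h
    have h0 : load α n k = 0 :=
      load_eq_zero_of_far hargmax hΓ hΓ0 (a := k') (b := k) (by linarith)
    have hlt := hover n hn
    rw [h0] at hlt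
    exact absurd hlt (Nat.not_lt_zero _)
  have hunder : ∀ n, N ≤ n → ∃ k0, load α n k0 < T / E := by
    intro n hn
    by_contra hall
    push_neg at hall
    have h1 : ∑ k' : Fin E, T / E < ∑ k', load α n k' :=
      Finset.sum_lt_sum (fun k' _ => hall k') ⟨k, Finset.mem_univ k, hover n hn⟩
    rw [sum_load] at h1
    rw [Finset.sum_const, Finset.card_univ, Fintype.card_fin, smul_eq_mul] at h1
    have h2 : E * (T / E) = T := Nat.mul_div_cancel' hdvd
    omega
  set D : ℕ → ℝ := fun n => ∑ k' : Fin E, (p n k' - p n k) with hD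
  have hstep : ∀ n, N ≤ n → D n + u ≤ D (n + 1) := by
    intro n hn
    have hterm : ∀ k' : Fin E, p (n+1) k' - p (n+1) k =
        (p n k' - p n k) + u * (Real.sign (targetLoad T E - (load α n k' : ℝ)) + 1) := by
      intro k'
      rw [hdual n k', hdual n k, hsk n hn]; ring
    have hrw : D (n+1) = D n + ∑ k' : Fin E,
        u * (Real.sign (targetLoad T E - (load α n k' : ℝ)) + 1) := by
      simp only [hD]
      rw [← Finset.sum_add_distrib]
      exact Finset.sum_congr rfl (fun k' _ => hterm k')
    obtain ⟨k0, hk0⟩ := hunder n hn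
    have hpos : ∀ k' ∈ (Finset.univ : Finset (Fin E)), 0 ≤
        u * (Real.sign (targetLoad T E - (load α n k' : ℝ)) + 1) := by
      intro k' _
      have := neg_one_le_sign (targetLoad T E - (load α n k' : ℝ))
      nlinarith
    have hk0s : Real.sign (targetLoad T E - (load α n k0 : ℝ)) = 1 := by
      apply Real.sign_of_pos
      rw [tl_eq hE hdvd]
      have : (load α n k0 : ℝ) < ((T / E : ℕ) : ℝ) := by exact_mod_cast hk0
      linarith
    have hsingle := Finset.single_le_sum hpos (Finset.mem_univ k0)
    rw [hk0s] at hsingle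
    rw [hrw]
    linarith
  have hgrow : ∀ m : ℕ, D N + m * u ≤ D (N + m) := by
    intro m
    induction m with
    | zero => simp
    | succ m ih =>
      have h1 := hstep (N + m) (Nat.le_add_right _ _)
      have : D N + (m + 1 : ℕ) * u = (D N + m * u) + u := by push_cast; ring
      rw [this, ← Nat.add_assoc]
      linarith
  have hcap : ∀ n, N ≤ n → D n ≤ E * (2 * Γ) := by
    intro n hn
    calc D n ≤ ∑ _k' : Fin E, 2 * Γ := Finset.sum_le_sum (fun k' _ => hdle n hn k')
      _ = E * (2 * Γ) := by
          rw [Finset.sum_const, Finset.card_univ, Fintype.card_fin, nsmul_eq_mul]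
  obtain ⟨m, hm⟩ := exists_nat_gt ((E * (2 * Γ) - D N) / u)
  have h3 : E * (2 * Γ) - D N < m * u := by
    rw [div_lt_iff₀ hu] at hm; linarith
  have h1 := hgrow m
  have h2 := hcap (N + m) (Nat.le_add_right _ _)
  linarith

lemma reach_ge (hE : 0 < E) (hdvd : E ∣ T) (hu : 0 < u)
    (hargmax : ∀ n (i : Fin T) (k : Fin E), k ≠ α n i →
      γ i k + p n k < γ i (α n i) + p n (α n i))
    (hdual : ∀ n (k : Fin E),
      p (n+1) k = p n k + u * Real.sign (targetLoad T E - (load α n k : ℝ)))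
    (k : Fin E) (N : ℕ) :
    ∃ n, N ≤ n ∧ T / E ≤ load α n k := by
  classical
  by_contra hcon
  push_neg at hcon
  have hunder : ∀ n, N ≤ n → load α n k < T / E := hcon
  have hM : 0 < T / E := lt_of_le_of_lt (Nat.zero_le _) (hunder N le_rfl)
  have hT : 0 < T := by
    have := Nat.div_mul_cancel hdvd
    nlinarith
  obtain ⟨i0⟩ : Nonempty (Fin T) := ⟨⟨0, hT⟩⟩
  set ΓS := (Finset.univ : Finset (Fin T × Fin E)).image fun q => |γ q.1 q.2| with hΓS
  have hne : ΓS.Nonempty := ⟨|γ i0 k|, Finset.mem_image.mpr ⟨(i0, k), Finset.mem_univ _, rfl⟩⟩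
  set Γ := ΓS.max' hne with hΓdef
  have hΓ : ∀ (i : Fin T) (kk : Fin E), |γ i kk| ≤ Γ := by
    intro i kk
    have hmem : |γ i kk| ∈ ΓS := Finset.mem_image.mpr ⟨(i, kk), Finset.mem_univ _, rfl⟩
    exact Finset.le_max' ΓS _ hmem
  have hΓ0 : 0 ≤ Γ := le_trans (abs_nonneg _) (hΓ i0 k)
  have hsk : ∀ n, N ≤ n → Real.sign (targetLoad T E - (load α n k : ℝ)) = 1 := by
    intro n hn
    apply Real.sign_of_pos
    rw [tl_eq hE hdvd]
    have : (load α n k : ℝ) < ((T / E : ℕ) : ℝ) := by exact_mod_cast hunder n hn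
    linarith
  -- lower bound (freeze) for each difference
  have hlow : ∀ (k' : Fin E) (n : ℕ), N ≤ n →
      min (p N k' - p N k) (-(2 * Γ)) - 2 * u ≤ p n k' - p n k := by
    intro k' n hn
    induction n, hn using Nat.le_induction with
    | base =>
      have h := min_le_left (p N k' - p N k) (-(2 * Γ))
      linarith
    | succ n hn ih =>
      have hterm : p (n+1) k' - p (n+1) k =
          (p n k' - p n k) + u * (Real.sign (targetLoad T E - (load α n k' : ℝ)) - 1) := by
        rw [hdual n k', hdual n k, hsk n hn]; ring
      by_cases hc : -(2 * Γ) ≤ p n k' - p n k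
      · have hs1 := neg_one_le_sign (targetLoad T E - (load α n k' : ℝ))
        have hmin := min_le_right (p N k' - p N k) (-(2 * Γ))
        rw [hterm]
        nlinarith
      · push_neg at hc
        have h0 : load α n k' = 0 :=
          load_eq_zero_of_far hargmax hΓ hΓ0 (a := k) (b := k') (by linarith)
        have hs' : Real.sign (targetLoad T E - (load α n k' : ℝ)) = 1 := by
          rw [h0]
          apply Real.sign_of_pos
          rw [tl_eq hE hdvd]
          have : (0 : ℝ) < ((T / E : ℕ) : ℝ) := by exact_mod_cast hM
          simpa using this
        rw [hterm, hs']
        simpa using ih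
  have hover : ∀ n, N ≤ n → ∃ k1, T / E < load α n k1 := by
    intro n hn
    by_contra hall
    push_neg at hall
    have h1 : ∑ k', load α n k' < ∑ _k' : Fin E, T / E :=
      Finset.sum_lt_sum (fun k' _ => hall k') ⟨k, Finset.mem_univ k, hunder n hn⟩
    rw [sum_load] at h1
    rw [Finset.sum_const, Finset.card_univ, Fintype.card_fin, smul_eq_mul] at h1
    have h2 : E * (T / E) = T := Nat.mul_div_cancel' hdvd
    omega
  set D : ℕ → ℝ := fun n => ∑ k' : Fin E, (p n k' - p n k) with hD
  have hstep : ∀ n, N ≤ n → D (n + 1) ≤ D n - u := by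
    intro n hn
    have hterm : ∀ k' : Fin E, p (n+1) k' - p (n+1) k =
        (p n k' - p n k) + u * (Real.sign (targetLoad T E - (load α n k' : ℝ)) - 1) := by
      intro k'
      rw [hdual n k', hdual n k, hsk n hn]; ring
    have hrw : D (n+1) = D n + ∑ k' : Fin E,
        u * (Real.sign (targetLoad T E - (load α n k' : ℝ)) - 1) := by
      simp only [hD]
      rw [← Finset.sum_add_distrib]
      exact Finset.sum_congr rfl (fun k' _ => hterm k')
    obtain ⟨k1, hk1⟩ := hover n hn
    have hk1s : Real.sign (targetLoad T E - (load α n k1 : ℝ)) = -1 := by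
      apply Real.sign_of_neg
      rw [tl_eq hE hdvd]
      have : ((T / E : ℕ) : ℝ) < (load α n k1 : ℝ) := by exact_mod_cast hk1
      linarith
    have hrest : ∑ k' ∈ Finset.univ.erase k1,
        u * (Real.sign (targetLoad T E - (load α n k' : ℝ)) - 1) ≤ 0 := by
      apply Finset.sum_nonpos
      intro k' _
      have := sign_le_one (targetLoad T E - (load α n k' : ℝ))
      nlinarith
    have hsplit : ∑ k' ∈ Finset.univ.erase k1,
          u * (Real.sign (targetLoad T E - (load α n k' : ℝ)) - 1) +
        u * (Real.sign (targetLoad T E - (load α n k1 : ℝ)) - 1) =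
        ∑ k' : Fin E, u * (Real.sign (targetLoad T E - (load α n k' : ℝ)) - 1) :=
      Finset.sum_erase_add Finset.univ _ (Finset.mem_univ k1)
    have hk1v : u * (Real.sign (targetLoad T E - (load α n k1 : ℝ)) - 1) = -(2 * u) := by
      rw [hk1s]; ring
    rw [hrw]
    have hle : ∑ k' : Fin E, u * (Real.sign (targetLoad T E - (load α n k' : ℝ)) - 1)
        ≤ -(2 * u) := by
      rw [← hsplit, hk1v]
      linarith
    linarith
  have hdecay : ∀ m : ℕ, D (N + m) ≤ D N - m * u := by
    intro m
    induction m with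
    | zero => simp
    | succ m ih =>
      have h1 := hstep (N + m) (Nat.le_add_right _ _)
      have h2 : D N - (m + 1 : ℕ) * u = (D N - m * u) - u := by push_cast; ring
      rw [h2, ← Nat.add_assoc]
      linarith
  set Bsum : ℝ := ∑ k' : Fin E, (min (p N k' - p N k) (-(2 * Γ)) - 2 * u) with hBsum
  have hfloor : ∀ n, N ≤ n → Bsum ≤ D n := by
    intro n hn
    exact Finset.sum_le_sum (fun k' _ => hlow k' n hn)
  obtain ⟨m, hm⟩ := exists_nat_gt ((D N - Bsum) / u)
  have h3 : D N - Bsum < m * u := by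
    rw [div_lt_iff₀ hu] at hm; linarith
  have h1 := hdecay m
  have h2 := hfloor (N + m) (Nat.le_add_right _ _)
  linarith

end Reach

end ApproxBalAux

/-- **Theorem (guarantee of approximate balancing).** With a constant step parameter
`u < ū`, every expert's load converges into `[L - (E-1), L + (E-1)]`: there is an
iteration `N` after which all expert loads stay in that range. -/

theorem approximate_balancing (T E : ℕ) (hE : 0 < E) (hdvd : E ∣ T)
    (γ : Fin T → Fin E → ℝ) (p : ℕ → Fin E → ℝ) (α : ℕ → Fin T → Fin E)
    (u : ℝ) (hu : 0 < u)
    -- no ties in bias-shifted scores: at every iteration each token has a unique argmax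
    (hargmax : ∀ n (i : Fin T) (k : Fin E), k ≠ α n i →
      γ i k + p n k < γ i (α n i) + p n (α n i))
    -- DeepSeek dual update: `pₖ⁽ⁿ⁺¹⁾ = pₖ⁽ⁿ⁾ + u · sign(L - Aₖ⁽ⁿ⁾)`
    (hdual : ∀ n (k : Fin E),
      p (n+1) k = p n k + u * Real.sign (targetLoad T E - (load α n k : ℝ)))
-- `u < ū`, where `ū = ½ min_{k ≠ k', i ≠ j} |𝔊γ^i_{kk'} - 𝔊γ^j_{kk'}|`
    (husmall : ∀ k k' : Fin E, k ≠ k' → ∀ i j : Fin T, i ≠ j →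
      2 * u < |(γ i k - γ i k') - (γ j k - γ j k')|) :
    ∃ N : ℕ, ∀ n ≥ N, ∀ k : Fin E,
      targetLoad T E - ((E : ℝ) - 1) ≤ (load α n k : ℝ)
        ∧ (load α n k : ℝ) ≤ targetLoad T E + ((E : ℝ) - 1) := by
  classical
  have htl : targetLoad T E = ((T / E : ℕ) : ℝ) := ApproxBalAux.tl_eq hE hdvd
  have hC1 : ∀ n (k : Fin E), load α (n+1) k ≤ load α n k + (E-1) :=
    fun n k => ApproxBalAux.load_next_le hu hargmax hdual husmall n k
  have hC2 : ∀ n (k : Fin E), load α n k ≤ load α (n+1) k + (E-1) :=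
    fun n k => ApproxBalAux.load_next_ge hu hargmax hdual husmall n k
  have hU1 : ∀ n (k : Fin E), load α n k < T/E → load α n k ≤ load α (n+1) k :=
    fun n k h => ApproxBalAux.under_subset hu hargmax hdual hE hdvd h
  have hO1 : ∀ n (k : Fin E), T/E < load α n k → load α (n+1) k ≤ load α n k :=
    fun n k h => ApproxBalAux.over_subset hu hargmax hdual hE hdvd h
  set M := T / E with hM
  have hPERSIST : ∀ n (k : Fin E),
      (load α n k ≤ M + (E-1) ∧ M ≤ load α n k + (E-1)) →
      (load α (n+1) k ≤ M + (E-1) ∧ M ≤ load α (n+1) k + (E-1)) := by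
    rintro n k ⟨h1, h2⟩
    rcases lt_trichotomy (load α n k) M with hc | hc | hc
    · have ha := hC1 n k; have hb := hU1 n k hc; omega
    · have ha := hC1 n k; have hb := hC2 n k; omega
    · have ha := hO1 n k hc; have hb := hC2 n k; omega
  have hENTER : ∀ k : Fin E, ∃ n, load α n k ≤ M + (E-1) ∧ M ≤ load α n k + (E-1) := by
    intro k
    by_cases h0 : load α 0 k ≤ M + (E-1) ∧ M ≤ load α 0 k + (E-1)
    · exact ⟨0, h0⟩
    rw [not_and_or] at h0
    rcases h0 with hHigh | hLow
    · push_neg at hHigh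
      obtain ⟨n1, _, hn1⟩ :=
        ApproxBalAux.reach_le (γ := γ) (p := p) hE hdvd hu hargmax hdual k 0
      have hex : ∃ n, load α n k ≤ M + (E-1) := ⟨n1, by omega⟩
      set n0 := Nat.find hex with hn0
      have hfind := Nat.find_spec hex
      rw [← hn0] at hfind
      have hn0pos : n0 ≠ 0 := by
        intro h; rw [h] at hfind; omega
      obtain ⟨m, hm⟩ : ∃ m, n0 = m + 1 := ⟨n0 - 1, by omega⟩
      have hprev : ¬ (load α m k ≤ M + (E-1)) := Nat.find_min hex (by omega)
      have hc2 := hC2 m k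
      rw [← hm] at hc2
      exact ⟨n0, hfind, by omega⟩
    · push_neg at hLow
      obtain ⟨n1, _, hn1⟩ :=
        ApproxBalAux.reach_ge (γ := γ) (p := p) hE hdvd hu hargmax hdual k 0
      have hex : ∃ n, M ≤ load α n k + (E-1) := ⟨n1, by omega⟩
      set n0 := Nat.find hex with hn0
      have hfind := Nat.find_spec hex
      rw [← hn0] at hfind
      have hn0pos : n0 ≠ 0 := by
        intro h; rw [h] at hfind; omega
      obtain ⟨m, hm⟩ : ∃ m, n0 = m + 1 := ⟨n0 - 1, by omega⟩
      have hprev : ¬ (M ≤ load α m k + (E-1)) := Nat.find_min hex (by omega)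
      have hc1 := hC1 m k
      rw [← hm] at hc1
      exact ⟨n0, by omega, hfind⟩
  have hALL : ∀ k : Fin E, ∃ N, ∀ n, N ≤ n →
      load α n k ≤ M + (E-1) ∧ M ≤ load α n k + (E-1) := by
    intro k
    obtain ⟨N, hN⟩ := hENTER k
    refine ⟨N, fun n hn => ?_⟩
    induction n, hn using Nat.le_induction with
    | base => exact hN
    | succ n hn ih => exact hPERSIST n k ih
  choose Nf hNf using hALL
  refine ⟨Finset.univ.sup Nf, fun n hn k => ?_⟩
  obtain ⟨h1, h2⟩ := hNf k n (le_trans (Finset.le_sup (Finset.mem_univ k)) hn)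
  have hE1 : ((E : ℝ) - 1) = ((E - 1 : ℕ) : ℝ) := by
    rw [Nat.cast_sub hE]; norm_num
  rw [htl, hE1]
  constructor
  · have hcast : (M : ℝ) ≤ (load α n k : ℝ) + ((E-1 : ℕ) : ℝ) := by exact_mod_cast h2
    linarith
  · have hcast : (load α n k : ℝ) ≤ (M : ℝ) + ((E-1 : ℕ) : ℝ) := by exact_mod_cast h1
    linarith
end
end

section
/- With the DeepSeek step-size ε_k^(n) = u/|L − A_k^(n)| (equivalently p_k^(n+1) = p_k^(n) + u·sign(L − A_k^(n))), assuming no ties in bias-shifted scores and a constant step parameter u < ū, where ū := (1/2) min over all pairs of distinct experts k, k' and distinct tokens i, j of |𝔊γ^i_{kk'} − 𝔊γ^j_{kk'}|: once an expert's load enters the range [L − (E−1), L + (E−1)], it remains in that range; that is, if L − (E−1) ≤ A_k^(n) ≤ L + (E−1) for some iteration n and expert k, then L − (E−1) ≤ A_k^(n+1) ≤ L + (E−1). -/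
open Finset

noncomputable section

lemma sign_bounds (x : ℝ) : -1 ≤ Real.sign x ∧ Real.sign x ≤ 1 := by
  rcases lt_trichotomy x 0 with h|h|h
  · simp [Real.sign_of_neg h]
  · simp [h]
  · simp [Real.sign_of_pos h]

/-- **Theorem (invariance of the balanced range).** With a constant step parameter
`u < ū`, once an expert's load enters `[L - (E-1), L + (E-1)]`, it remains there. -/
theorem balanced_range_invariant (T E : ℕ) (hE : 0 < E) (hdvd : E ∣ T)
    (γ : Fin T → Fin E → ℝ) (p : ℕ → Fin E → ℝ) (α : ℕ → Fin T → Fin E)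
    (u : ℝ) (hu : 0 < u)
    -- no ties in bias-shifted scores: at every iteration each token has a unique argmax
    (hargmax : ∀ n (i : Fin T) (k : Fin E), k ≠ α n i →
      γ i k + p n k < γ i (α n i) + p n (α n i))
    -- DeepSeek dual update: `pₖ⁽ⁿ⁺¹⁾ = pₖ⁽ⁿ⁾ + u · sign(L - Aₖ⁽ⁿ⁾)`
    (hdual : ∀ n (k : Fin E),
      p (n+1) k = p n k + u * Real.sign (targetLoad T E - (load α n k : ℝ)))
-- `u < ū`, where `ū = ½ min_{k ≠ k', i ≠ j} |𝔊γ^i_{kk'} - 𝔊γ^j_{kk'}|`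
    (husmall : ∀ k k' : Fin E, k ≠ k' → ∀ i j : Fin T, i ≠ j →
      2 * u < |(γ i k - γ i k') - (γ j k - γ j k')|)
    (n : ℕ) (k : Fin E)
    (hlo : targetLoad T E - ((E : ℝ) - 1) ≤ (load α n k : ℝ))
    (hhi : (load α n k : ℝ) ≤ targetLoad T E + ((E : ℝ) - 1)) :
    targetLoad T E - ((E : ℝ) - 1) ≤ (load α (n+1) k : ℝ)
      ∧ (load α (n+1) k : ℝ) ≤ targetLoad T E + ((E : ℝ) - 1) := by
  set L : ℝ := targetLoad T E with hLdef
  -- basic switching inequalities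
  have hswitch : ∀ i : Fin T, α n i ≠ α (n+1) i →
      (p (n+1) (α n i) - p (n+1) (α (n+1) i) < γ i (α (n+1) i) - γ i (α n i)) ∧
      (γ i (α (n+1) i) - γ i (α n i) < p n (α n i) - p n (α (n+1) i)) := by
    intro i hne
    have h1 := hargmax n i (α (n+1) i) (Ne.symm hne)
    have h2 := hargmax (n+1) i (α n i) hne
    constructor <;> linarith
  -- sign monotonicity along a switch: destination sign > source sign
  have hsign_lt : ∀ i : Fin T, α n i ≠ α (n+1) i →
      Real.sign (L - (load α n (α n i) : ℝ)) <
        Real.sign (L - (load α n (α (n+1) i) : ℝ)) := by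
    intro i hne
    obtain ⟨h1, h2⟩ := hswitch i hne
    rw [hdual n (α n i), hdual n (α (n+1) i)] at h1
    have : u * Real.sign (L - (load α n (α n i) : ℝ)) <
        u * Real.sign (L - (load α n (α (n+1) i) : ℝ)) := by linarith
    exact (mul_lt_mul_iff_right₀ hu).mp this
  -- at most one token can switch from k' to k
  have hinj : ∀ i j : Fin T, α n i ≠ α (n+1) i → α n j ≠ α (n+1) j →
      α n i = α n j → α (n+1) i = α (n+1) j → i = j := by
    intro i j hi hj hsrc hdst
    by_contra hij
    obtain ⟨hi1, hi2⟩ := hswitch i hi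
    obtain ⟨hj1, hj2⟩ := hswitch j hj
    set k' := α n j
    set kd := α (n+1) j
    have hkk' : kd ≠ k' := fun h => hj h.symm
    have hb := husmall kd k' hkk' i j hij
    rw [hsrc, hdst] at hi1 hi2
    have hw1 := hdual n k'
    have hw2 := hdual n kd
    obtain ⟨hs1, hs2⟩ := sign_bounds (L - (load α n k' : ℝ))
    obtain ⟨hs3, hs4⟩ := sign_bounds (L - (load α n kd : ℝ))
    have habs : |(γ i kd - γ i k') - (γ j kd - γ j k')| < 2 * u := by
      rw [abs_sub_lt_iff]
      constructor <;> nlinarith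
    linarith [habs, hb]
  -- L is a nonneg integer c
  obtain ⟨c, rfl⟩ := hdvd
  have hEne : (E : ℝ) ≠ 0 := Nat.cast_ne_zero.mpr hE.ne'
  have hLc : L = (c : ℝ) := by
    rw [hLdef, targetLoad]
    push_cast
    field_simp
  -- decompose loads
  classical
  set S : Finset (Fin (E * c)) := Finset.univ.filter (fun i => α (n+1) i = k) with hS
  set Sold : Finset (Fin (E * c)) := Finset.univ.filter (fun i => α n i = k) with hSold
  set Stay : Finset (Fin (E * c)) := S.filter (fun i => α n i = k) with hStay
  set Inn : Finset (Fin (E * c)) := S.filter (fun i => ¬ α n i = k) with hInn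
  set Outt : Finset (Fin (E * c)) := Sold.filter (fun i => ¬ α (n+1) i = k) with hOutt
  have hload1 : load α (n+1) k = Stay.card + Inn.card :=
    (Finset.card_filter_add_card_filter_not (s := S) (p := fun i => α n i = k)).symm
  have hStayEq : Sold.filter (fun i => α (n+1) i = k) = Stay := by
    ext i
    simp only [hStay, hSold, hS, Finset.mem_filter, Finset.mem_univ, true_and]
    tauto
  have hload0 : load α n k = Stay.card + Outt.card := by
    rw [← hStayEq] at *
    exact (Finset.card_filter_add_card_filter_not
      (s := Sold) (p := fun i => α (n+1) i = k)).symm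
  -- cardinality bounds via injectivity
  have hcardIn : (Inn.card : ℝ) ≤ (E : ℝ) - 1 := by
    have : Inn.card ≤ (Finset.univ.erase k).card := by
      apply Finset.card_le_card_of_injOn (fun i => α n i)
      · intro i hi
        simp only [hInn, hS, Finset.mem_coe, Finset.mem_filter, Finset.mem_univ, true_and] at hi
        exact Finset.mem_erase.mpr ⟨hi.2, Finset.mem_univ _⟩
      · intro i hi j hj hij
        simp only [hInn, hS, Finset.mem_coe, Finset.mem_filter, Finset.mem_univ, true_and] at hi hj
        exact hinj i j (fun h => hi.2 (h.trans hi.1)) (fun h => hj.2 (h.trans hj.1))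
          hij (hi.1.trans hj.1.symm)
    have hcE : (Finset.univ.erase k).card = E - 1 := by
      rw [Finset.card_erase_of_mem (Finset.mem_univ k)]
      simp
    rw [hcE] at this
    have := (Nat.cast_le (α := ℝ)).mpr this
    rw [Nat.cast_sub hE] at this
    simpa using this
  have hcardOut : (Outt.card : ℝ) ≤ (E : ℝ) - 1 := by
    have : Outt.card ≤ (Finset.univ.erase k).card := by
      apply Finset.card_le_card_of_injOn (fun i => α (n+1) i)
      · intro i hi
        simp only [hOutt, hSold, Finset.mem_coe, Finset.mem_filter, Finset.mem_univ, true_and] at hi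
        exact Finset.mem_erase.mpr ⟨hi.2, Finset.mem_univ _⟩
      · intro i hi j hj hij
        simp only [hOutt, hSold, Finset.mem_coe, Finset.mem_filter, Finset.mem_univ, true_and] at hi hj
        exact hinj i j (fun h => hi.2 (h.symm.trans hi.1)) (fun h => hj.2 (h.symm.trans hj.1))
          (hi.1.trans hj.1.symm) hij
    have hcE : (Finset.univ.erase k).card = E - 1 := by
      rw [Finset.card_erase_of_mem (Finset.mem_univ k)]
      simp
    rw [hcE] at this
    have := (Nat.cast_le (α := ℝ)).mpr this
    rw [Nat.cast_sub hE] at this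
    simpa using this
  obtain ⟨hsk1, hsk2⟩ := sign_bounds (L - (load α n k : ℝ))
  rcases lt_trichotomy (load α n k) c with hcase | hcase | hcase
  · -- underloaded: no outflow
    have hsignk : Real.sign (L - (load α n k : ℝ)) = 1 := by
      apply Real.sign_of_pos
      rw [hLc]
      have : (load α n k : ℝ) < (c : ℝ) := by exact_mod_cast hcase
      linarith
    have hOutEmpty : Outt = ∅ := by
      rw [Finset.eq_empty_iff_forall_notMem]
      intro i hi
      simp only [hOutt, hSold, Finset.mem_filter, Finset.mem_univ, true_and] at hi
      have hne : α n i ≠ α (n+1) i := fun h => hi.2 (h.symm.trans hi.1)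
      have := hsign_lt i hne
      rw [hi.1, hsignk] at this
      obtain ⟨_, h2⟩ := sign_bounds (L - (load α n (α (n+1) i) : ℝ))
      linarith
    have hOut0 : Outt.card = 0 := by rw [hOutEmpty]; exact Finset.card_empty
    have hb : (load α n k : ℝ) ≤ (c : ℝ) - 1 := by
      have : load α n k + 1 ≤ c := hcase
      have := (Nat.cast_le (α := ℝ)).mpr this
      push_cast at this
      linarith
    constructor
    · have : (load α n k : ℝ) ≤ (load α (n+1) k : ℝ) := by
        rw [hload1, hload0, hOut0]
        push_cast
        linarith [Nat.cast_nonneg (α := ℝ) Inn.card]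
      linarith
    · rw [hload1, hload0, hOut0] at *
      push_cast at *
      have hE1 : (1 : ℝ) ≤ (E : ℝ) := by exact_mod_cast hE
      rw [hLc]
      linarith
  · -- exactly balanced
    have hlc : (load α n k : ℝ) = (c : ℝ) := by exact_mod_cast hcase
    constructor
    · rw [hload1]
      rw [hload0] at hlc
      push_cast at *
      rw [hLc]
      linarith [Nat.cast_nonneg (α := ℝ) Inn.card]
    · rw [hload1]
      rw [hload0] at hlc
      push_cast at *
      rw [hLc]
      linarith [Nat.cast_nonneg (α := ℝ) Outt.card]
  · -- overloaded: no inflow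
    have hsignk : Real.sign (L - (load α n k : ℝ)) = -1 := by
      apply Real.sign_of_neg
      rw [hLc]
      have : (c : ℝ) < (load α n k : ℝ) := by exact_mod_cast hcase
      linarith
    have hInEmpty : Inn = ∅ := by
      rw [Finset.eq_empty_iff_forall_notMem]
      intro i hi
      simp only [hInn, hS, Finset.mem_filter, Finset.mem_univ, true_and] at hi
      have hne : α n i ≠ α (n+1) i := fun h => hi.2 (h.trans hi.1)
      have := hsign_lt i hne
      rw [hi.1, hsignk] at this
      obtain ⟨h1, _⟩ := sign_bounds (L - (load α n (α n i) : ℝ))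
      linarith
    have hIn0 : Inn.card = 0 := by rw [hInEmpty]; exact Finset.card_empty
    have hb : (c : ℝ) + 1 ≤ (load α n k : ℝ) := by
      have : c + 1 ≤ load α n k := hcase
      have := (Nat.cast_le (α := ℝ)).mpr this
      push_cast at this
      linarith
    constructor
    · rw [hload1, hIn0]
      rw [hload0] at hb
      push_cast at *
      have hE1 : (1 : ℝ) ≤ (E : ℝ) := by exact_mod_cast hE
      rw [hLc]
      linarith
    · have : (load α (n+1) k : ℝ) ≤ (load α n k : ℝ) := by
        rw [hload1, hload0, hIn0]
        push_cast
        linarith [Nat.cast_nonneg (α := ℝ) Outt.card]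
      linarith
end
end
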